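/- For all n, r, s ≥ 0, G_{a,b}(n;r+s) = Σ_{i=0}^{n} C(n,i) · G_{a,b}(i;r) · ∏_{j=0}^{n−i−1}(a·j + (a+b)·s), where G_{a,b}(n;r) := Σ_{k=0}^{n} G_{a,b}(n,k;r). -/

import Mathlib

/-!
The identity holds entrywise: `G_{a,b}(n,k;r+s)` is the binomial convolution of
`i ↦ G_{a,b}(i,k;r)` with `m ↦ ∏_{j<m} (a·j + (a+b)·s)`. Both sequences obey first-order
recurrences whose coefficients (`a·i + b·k + (a+b)·r` and `a·m + (a+b)·s`) are affine with the same
slope `a`. By Pascal's rule their binomial convolution then obeys the recurrence with the summed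
coefficient `a·n + b·k + (a+b)·(r+s)`, which is that of `G_{a,b}(n,k;r+s)`. Summing over `k` gives
the row sums.
-/

open Finset

/-- The generalized r-Lah numbers `G_{a,b}(n,k;r)`. -/
def genLah {R : Type*} [CommRing R] (a b : R) (r : ℕ) : ℕ → ℕ → R
  | 0, 0 => 1
  | 0, _ + 1 => 0
  | n + 1, 0 => (a * ((n : R) + (r : R)) + b * (r : R)) * genLah a b r n 0
  | n + 1, k + 1 => genLah a b r n k +
      (a * (n : R) + b * ((k : R) + 1) + (a + b) * (r : R)) * genLah a b r n (k + 1)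

section BinomialConvolution

variable {R : Type*} [CommRing R]

def binomialConv (u v : ℕ → R) (n : ℕ) : R :=
  ∑ ij ∈ antidiagonal n, (n.choose ij.1 : R) * u ij.1 * v ij.2

theorem binomialConv_succ_of_recurrence (a α β : R) {d u v : ℕ → R}
    (hu : ∀ i, u (i + 1) = d i + (a * i + α) * u i) (hv : ∀ j, v (j + 1) = (a * j + β) * v j)
    (n : ℕ) :
    binomialConv u v (n + 1) = binomialConv d v n + (a * n + α + β) * binomialConv u v n := by
  simp only [binomialConv, mul_assoc]
  rw [sum_antidiagonal_choose_succ_mul (fun i j => u i * v j), mul_sum, ← sum_add_distrib,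
    ← sum_add_distrib]
  refine sum_congr rfl fun ⟨i, j⟩ hij => ?_
  obtain rfl : i + j = n := mem_antidiagonal.mp hij
  rw [← Nat.choose_symm_add, hu, hv]
  push_cast
  ring

end BinomialConvolution

section GenLah

variable {R : Type*} [CommRing R] (a b : R) (r : ℕ)

theorem genLah_eq_zero_of_lt {n k : ℕ} (h : n < k) : genLah a b r n k = 0 := by
  induction n generalizing k with
  | zero => obtain ⟨k, rfl⟩ := Nat.exists_eq_succ_of_ne_zero h.ne'; rfl
  | succ n ih =>
    obtain ⟨k, rfl⟩ := Nat.exists_eq_succ_of_ne_zero (Nat.ne_zero_of_lt h)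
    simp only [genLah, ih (Nat.lt_of_succ_lt_succ h), ih (Nat.lt_of_succ_lt h), mul_zero, add_zero]

theorem sum_range_genLah_of_le {n m : ℕ} (h : n ≤ m) :
    ∑ k ∈ range (m + 1), genLah a b r n k = ∑ k ∈ range (n + 1), genLah a b r n k :=
  (sum_subset (range_subset_range.mpr (by omega)) fun _ _ hk =>
    genLah_eq_zero_of_lt a b r (by simpa using hk)).symm

theorem genLah_add_eq_binomialConv (s n k : ℕ) :
    genLah a b (r + s) n k =
      binomialConv (genLah a b r · k) (fun m => ∏ j ∈ range m, (a * j + (a + b) * s)) n := by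
  have hprod (j : ℕ) : ∏ i ∈ range (j + 1), (a * i + (a + b) * s) =
      (a * j + (a + b) * s) * ∏ i ∈ range j, (a * i + (a + b) * s) := by
    rw [prod_range_succ, mul_comm]
  induction n generalizing k with
  | zero => cases k <;> simp [binomialConv, genLah]
  | succ n ih =>
    cases k with
    | zero =>
      rw [binomialConv_succ_of_recurrence a ((a + b) * r) ((a + b) * s) (d := fun _ => 0)
        (fun i => by simp only [genLah]; ring) hprod]
      simp only [genLah, ih, binomialConv, mul_zero, zero_mul, sum_const_zero]
      push_cast
      ring
    | succ k =>
      rw [binomialConv_succ_of_recurrence a (b * (k + 1) + (a + b) * r) ((a + b) * s)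
        (d := (genLah a b r · k)) (fun i => by simp only [genLah]; ring) hprod]
      simp only [genLah, ih]
      push_cast
      ring

end GenLah

theorem genLah_rowSum_r_add_s {R : Type*} [CommRing R] (a b : R) (r s n : ℕ) :
    (∑ k ∈ range (n + 1), genLah a b (r + s) n k) =
      ∑ i ∈ range (n + 1), (n.choose i : R) * (∑ k ∈ range (i + 1), genLah a b r i k) *
        ∏ j ∈ range (n - i), (a * (j : R) + (a + b) * (s : R)) := by
  simp only [genLah_add_eq_binomialConv a b r s, binomialConv]
  rw [sum_comm, Finset.Nat.sum_antidiagonal_eq_sum_range_succ_mk]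
  refine sum_congr rfl fun i hi => ?_
  rw [← sum_range_genLah_of_le a b r (Nat.lt_succ_iff.mp (mem_range.mp hi)), mul_sum, sum_mul]
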